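/- (Finitary Soundness of Null Typing) Let M be a closed term of Λ⊕^cbv such that ⊢_w M : 𝟘 is derivable. Then there exists k ∈ ℕ such that w ≤ etime_k(M); in particular w ≤ ETime(M). -/

import Mathlib

open scoped ENNReal

namespace CbV

/-! ### Terms of the probabilistic call-by-value λ-calculus `Λ⊕^cbv` -/

mutual
inductive Val : Type
  | var : ℕ → Val
  | lam : ℕ → Tm → Val
inductive Tm : Type
  | val : Val → Tm
  | app : Val → Val → Tm
  | choice : Tm → Tm → Tm
  | letin : ℕ → Tm → Tm → Tm
end

-- Substitution of a value for a variable.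
mutual
def substV : Val → ℕ → Val → Val
  | .var y, x, V => if y = x then V else .var y
  | .lam y M, x, V => if y = x then .lam y M else .lam y (substT M x V)
def substT : Tm → ℕ → Val → Tm
  | .val W, x, V => .val (substV W x V)
  | .app W U, x, V => .app (substV W x V) (substV U x V)
  | .choice M N, x, V => .choice (substT M x V) (substT N x V)
  | .letin y N M, x, V => .letin y (substT N x V) (if y = x then M else substT M x V)
end

mutual
def fvV : Val → Finset ℕ
  | .var x => {x}
  | .lam x M => fvT M \ {x}
def fvT : Tm → Finset ℕ
  | .val V => fvV V
  | .app V W => fvV V ∪ fvV W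
  | .choice M N => fvT M ∪ fvT N
  | .letin x N M => fvT N ∪ (fvT M \ {x})
end

def Tm.Closed (M : Tm) : Prop := fvT M = ∅
def Val.Closed (V : Val) : Prop := fvV V = ∅

def Tm.isVal : Tm → Bool
  | .val _ => true
  | _ => false

/-! ### Multidistributions and the operational semantics -/

/-- Multidistributions over terms, represented as finite multisets of scaled terms. -/
abbrev MDist := Multiset (ℚ × Tm)

def scaleM (q : ℚ) (m : MDist) : MDist := m.map fun p => (q * p.1, p.2)

/-- One-step reduction from terms to multidistributions. -/
inductive Step : Tm → MDist → Prop
  | beta (x : ℕ) (M : Tm) (V : Val) :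
      Step (.app (.lam x M) V) {(1, substT M x V)}
  | letval (x : ℕ) (V : Val) (M : Tm) :
      Step (.letin x (.val V) M) {(1, substT M x V)}
  | choice (M N : Tm) : Step (.choice M N) {(1/2, M), (1/2, N)}
  | letstep {N : Tm} {m : MDist} (x : ℕ) (M : Tm) :
      Step N m → Step (.letin x N M) (m.map fun p => (p.1, Tm.letin x p.2 M))

/-- Lifting of one-step reduction to multidistributions. -/
inductive Lift : MDist → MDist → Prop
  | value (V : Val) : Lift {(1, Tm.val V)} {(1, Tm.val V)}
  | single {M : Tm} {m : MDist} : Step M m → Lift {(1, M)} m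
  | multi (s : Multiset (ℚ × Tm × MDist)) :
      (∀ x ∈ s, Lift {(1, x.2.1)} x.2.2) →
      Lift (s.map fun x => (x.1, x.2.1)) ((s.map fun x => scaleM x.1 x.2.2).sum)

/-- Functional presentation of one-step reduction (values, and stuck open
terms, are kept unchanged); it agrees with `Step` on closed non-value terms. -/
def stepF : Tm → MDist
  | .val V => {(1, .val V)}
  | .app (.lam x M) W => {(1, substT M x W)}
  | .app (.var y) W => {(1, .app (.var y) W)}
  | .choice M N => {(1/2, M), (1/2, N)}
  | .letin x (.val V) M => {(1, substT M x V)}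
  | .letin x N M => (stepF N).map fun p => (p.1, Tm.letin x p.2 M)

def mstepF (m : MDist) : MDist := (m.map fun p => scaleM p.1 (stepF p.2)).sum

/-- The unique reduction sequence `[M] = 𝔪₀ ⇛ 𝔪₁ ⇛ …` of a closed term. -/
def traj (M : Tm) (k : ℕ) : MDist := mstepF^[k] {(1, M)}

/-- `‖𝔪‖𝒱`: the probability that `𝔪` is a value. -/
def normV (m : MDist) : ℚ := ((m.filter fun p => p.2.isVal = true).map Prod.fst).sum

/-- `eval_k(M)`: the probability that `M` terminates within `k` steps. -/
def evalP (k : ℕ) (M : Tm) : ℚ := normV (traj M k)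

/-- `ProbTerm(M) = sup_k eval_k(M)`. -/
noncomputable def ProbTerm (M : Tm) : ℝ := ⨆ k : ℕ, ((evalP k M : ℚ) : ℝ)

/-- `etime_n(M) = Σ_{k<n} (1 - eval_k(M))`. -/
def etime (n : ℕ) (M : Tm) : ℚ := ∑ k ∈ Finset.range n, (1 - evalP k M)

/-- `ETime(M) = Σ_{k≥0} (1 - eval_k(M)) ∈ [0,∞]`, the expected runtime. -/
noncomputable def ETime (M : Tm) : ℝ≥0∞ :=
  ∑' k : ℕ, ENNReal.ofReal ((1 : ℝ) - ((evalP k M : ℚ) : ℝ))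

/-! ### Non-idempotent monadic intersection types -/

/-- Arrow types `𝖠 ::= 𝒜 → 𝔞`, where `𝒜` is an intersection type
(a finite multiset of scaled arrow types, represented as a list) and `𝔞`
is a type distribution (a multidistribution of intersection types,
represented as a list). -/
inductive ATy : Type
  | arr : List (ℚ × ATy) → List (ℚ × List (ℚ × ATy)) → ATy

/-- Intersection types. -/
abbrev ITy := List (ℚ × ATy)
/-- Type distributions. -/
abbrev DTy := List (ℚ × ITy)

/-- A type of any of the three kinds. -/
inductive Ty : Type
  | arrow : ATy → Ty
  | inter : ITy → Ty
  | dist : DTy → Ty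

/-- Typing contexts. -/
abbrev Ctx := ℕ → ITy

def emptyCtx : Ctx := fun _ => []

def scaleL {α : Type} (q : ℚ) (l : List (ℚ × α)) : List (ℚ × α) :=
  l.map fun p => (q * p.1, p.2)

def ctxUnion (Γ Δ : Ctx) : Ctx := fun x => Γ x ++ Δ x

/-- A type distribution is tight if every intersection type in it is empty. -/
def Tight (a : DTy) : Prop := ∀ p ∈ a, p.2 = ([] : ITy)

/-- `‖𝔞‖`: the sum of the probabilities occurring in a type distribution. -/
def normD (a : DTy) : ℚ := (a.map Prod.fst).sum

/-- Typing derivations `Π ⊳ Γ ⊢_w M : σ`. -/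
inductive Deriv : Ctx → ℚ → Tm → Ty → Type
  | var (x : ℕ) (A : ITy) :
      Deriv (Function.update emptyCtx x A) 0 (.val (.var x)) (.inter A)
  | zero (M : Tm) : Deriv emptyCtx 0 M (.dist [])
  | lam {Γ : Ctx} {w : ℚ} {M : Tm} (x : ℕ) (b : DTy) :
      Deriv Γ w M (.dist b) →
      Deriv (Function.update Γ x []) (w + 1) (.val (.lam x M)) (.arrow (.arr (Γ x) b))
  | app {Γ Δ : Ctx} {w v : ℚ} {V W : Val} {A : ITy} {b : DTy} :
      Deriv Γ w (.val V) (.inter [(1, .arr A b)]) →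
      Deriv Δ v (.val W) (.inter A) →
      Deriv (ctxUnion Γ Δ) (w + v) (.app V W) (.dist b)
  | choice {Γ Δ : Ctx} {w v : ℚ} {M N : Tm} {a b : DTy} :
      Deriv Γ w M (.dist a) → Deriv Δ v N (.dist b) →
      Deriv (ctxUnion (fun y => scaleL (1/2) (Γ y)) (fun y => scaleL (1/2) (Δ y)))
        (w / 2 + v / 2 + 1) (.choice M N)
        (.dist (scaleL (1/2) a ++ scaleL (1/2) b))
  | letin {Γ : Ctx} {v : ℚ} (x : ℕ) {N M : Tm}
      (K : List (ℚ × ITy × Ctx × ℚ × DTy)) :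
      (∀ k ∈ K, k.2.2.1 x = []) →
      ((i : Fin K.length) →
        Deriv (Function.update (K.get i).2.2.1 x (K.get i).2.1)
          (K.get i).2.2.2.1 M (.dist (K.get i).2.2.2.2)) →
      Deriv Γ v N (.dist (K.map fun k => (k.1, k.2.1))) →
      Deriv (ctxUnion Γ (fun y => (K.map fun k => scaleL k.1 (k.2.2.1 y)).flatten))
        ((K.map fun k => k.1 * k.2.2.2.1).sum + v + 1)
        (.letin x N M)
        (.dist (K.map fun k => scaleL k.1 k.2.2.2.2).flatten)
  | tval {Γ : Ctx} {w : ℚ} {V : Val} {A : ITy} :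
      Deriv Γ w (.val V) (.inter A) → Deriv Γ w (.val V) (.dist [(1, A)])
  | bang {V : Val} (I : List (ℚ × Ctx × ℚ × ATy)) :
      (∀ k ∈ I, 0 < k.1 ∧ k.1 ≤ 1) →
      ((i : Fin I.length) →
        Deriv (I.get i).2.1 (I.get i).2.2.1 (.val V) (.arrow (I.get i).2.2.2)) →
      Deriv (fun y => (I.map fun k => scaleL k.1 (k.2.1 y)).flatten)
        ((I.map fun k => k.1 * k.2.2.1).sum) (.val V)
        (.inter (I.map fun k => (k.1, k.2.2.2)))

/-- Size of a derivation: the number of rules, excluding `!` and `Val`. -/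
def Deriv.size : ∀ {Γ : Ctx} {w : ℚ} {M : Tm} {τ : Ty}, Deriv Γ w M τ → ℕ
  | _, _, _, _, .var _ _ => 1
  | _, _, _, _, .zero _ => 1
  | _, _, _, _, .lam _ _ d => d.size + 1
  | _, _, _, _, .app d e => d.size + e.size + 1
  | _, _, _, _, .choice d e => d.size + e.size + 1
  | _, _, _, _, .letin _ _ _ f d => d.size + (List.ofFn fun i => (f i).size).sum + 1
  | _, _, _, _, .tval d => d.size
  | _, _, _, _, .bang _ _ f => (List.ofFn fun i => (f i).size).sum

/-!
Soundness goes through a quantitative logical relation in continuation-passing style: a term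
realizes a type distribution with weight `w` when, plugged into any evaluation context
`let y = [·] in Mc` that earns enough on values of each component, it makes the truncated
expected time `etime` of the whole term grow by `w`. Every typing rule preserves
realizability (each reduction step earns `1`, and `let`-contexts can be reassociated), so
`⊢_w M : 𝟘` makes `M` realize `𝟘` with weight `w`. The context `let y = [·] in y` earns `1`
on every value, whence `w + 1 ≤ etime (k + 1) (let y = M in y) = 1 + etime k M`.
-/

theorem mem_fvV_lam {y z : ℕ} {M : Tm} : y ∈ fvV (.lam z M) ↔ y ∈ fvT M ∧ y ≠ z := by
  simp [fvV]

mutual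
theorem substV_of_notMem : ∀ (V : Val) {x : ℕ} (W : Val), x ∉ fvV V → substV V x W = V
  | .var y, x, W, h => by
      have : y ≠ x := by rintro rfl; simp [fvV] at h
      simp [substV, this]
  | .lam y M, x, W, h => by
      by_cases hyx : y = x
      · simp [substV, hyx]
      · have : x ∉ fvT M := fun hx => h (mem_fvV_lam.mpr ⟨hx, Ne.symm hyx⟩)
        simp [substV, hyx, substT_of_notMem M W this]
theorem substT_of_notMem : ∀ (M : Tm) {x : ℕ} (W : Val), x ∉ fvT M → substT M x W = M
  | .val V, x, W, h => by simp [substT, substV_of_notMem V W h]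
  | .app V U, x, W, h => by
      simp only [fvT, Finset.mem_union, not_or] at h
      simp [substT, substV_of_notMem V W h.1, substV_of_notMem U W h.2]
  | .choice M N, x, W, h => by
      simp only [fvT, Finset.mem_union, not_or] at h
      simp [substT, substT_of_notMem M W h.1, substT_of_notMem N W h.2]
  | .letin y N M, x, W, h => by
      simp only [fvT, Finset.mem_union, Finset.mem_sdiff, Finset.mem_singleton, not_or,
        not_and_not_right] at h
      by_cases hyx : y = x
      · simp [substT, hyx, substT_of_notMem N W h.1]
      · simp [substT, hyx, substT_of_notMem N W h.1,
          substT_of_notMem M W fun hx => hyx (h.2 hx).symm]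
end

mutual
theorem mem_fvV_substV : ∀ (V : Val) (x : ℕ) (W : Val) {y : ℕ},
    y ∈ fvV (substV V x W) → (y ∈ fvV V ∧ y ≠ x) ∨ y ∈ fvV W
  | .var z, x, W, y, h => by
      by_cases hzx : z = x
      · simp_all [substV]
      · simp only [substV, if_neg hzx, fvV, Finset.mem_singleton] at h
        subst h
        exact Or.inl ⟨by simp [fvV], hzx⟩
  | .lam z M, x, W, y, h => by
      by_cases hzx : z = x
      · simp only [substV, if_pos hzx] at h
        exact Or.inl ⟨h, hzx ▸ (mem_fvV_lam.mp h).2⟩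
      · simp only [substV, if_neg hzx, mem_fvV_lam] at h
        rcases mem_fvT_substT M x W h.1 with ⟨h1, h2⟩ | h1
        · exact Or.inl ⟨mem_fvV_lam.mpr ⟨h1, h.2⟩, h2⟩
        · exact Or.inr h1
theorem mem_fvT_substT : ∀ (M : Tm) (x : ℕ) (W : Val) {y : ℕ},
    y ∈ fvT (substT M x W) → (y ∈ fvT M ∧ y ≠ x) ∨ y ∈ fvV W
  | .val V, x, W, y, h => mem_fvV_substV V x W h
  | .app V U, x, W, y, h => by
      simp only [substT, fvT, Finset.mem_union] at h ⊢
      rcases h with h | h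
      · rcases mem_fvV_substV V x W h with h | h <;> tauto
      · rcases mem_fvV_substV U x W h with h | h <;> tauto
  | .choice M N, x, W, y, h => by
      simp only [substT, fvT, Finset.mem_union] at h ⊢
      rcases h with h | h
      · rcases mem_fvT_substT M x W h with h | h <;> tauto
      · rcases mem_fvT_substT N x W h with h | h <;> tauto
  | .letin z N M, x, W, y, h => by
      simp only [substT, fvT, Finset.mem_union, Finset.mem_sdiff, Finset.mem_singleton] at h ⊢
      rcases h with h | ⟨h, hyz⟩
      · rcases mem_fvT_substT N x W h with h | h <;> tauto
      · by_cases hzx : z = x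
        · rw [if_pos hzx] at h
          exact Or.inl ⟨Or.inr ⟨h, hyz⟩, hzx ▸ hyz⟩
        · rw [if_neg hzx] at h
          rcases mem_fvT_substT M x W h with h | h <;> tauto
end

theorem closed_substT {M : Tm} {x : ℕ} {W : Val} (hM : fvT M ⊆ {x}) (hW : W.Closed) :
    (substT M x W).Closed := by
  refine Finset.eq_empty_iff_forall_notMem.mpr fun y hy => ?_
  rcases mem_fvT_substT M x W hy with ⟨h1, h2⟩ | h1
  · exact h2 (Finset.mem_singleton.mp (hM h1))
  · simp [show fvV W = ∅ from hW] at h1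

-- Simultaneous substitution; it avoids capture only when the substituted values are closed.
mutual
def msubstV : Val → (ℕ → Val) → Val
  | .var y, θ => θ y
  | .lam y M, θ => .lam y (msubstT M (Function.update θ y (.var y)))
def msubstT : Tm → (ℕ → Val) → Tm
  | .val W, θ => .val (msubstV W θ)
  | .app W U, θ => .app (msubstV W θ) (msubstV U θ)
  | .choice M N, θ => .choice (msubstT M θ) (msubstT N θ)
  | .letin y N M, θ => .letin y (msubstT N θ) (msubstT M (Function.update θ y (.var y)))
end

mutual
theorem mem_fvV_msubstV : ∀ (V : Val) (θ : ℕ → Val) {y : ℕ},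
    y ∈ fvV (msubstV V θ) → ∃ z ∈ fvV V, y ∈ fvV (θ z)
  | .var z, θ, y, h => ⟨z, by simp [fvV], h⟩
  | .lam z M, θ, y, h => by
      simp only [msubstV, mem_fvV_lam] at h
      obtain ⟨u, hu, hyu⟩ := mem_fvT_msubstT M _ h.1
      by_cases huz : u = z
      · subst huz
        simp [fvV, h.2] at hyu
      · exact ⟨u, mem_fvV_lam.mpr ⟨hu, huz⟩, by rwa [Function.update_of_ne huz] at hyu⟩
theorem mem_fvT_msubstT : ∀ (M : Tm) (θ : ℕ → Val) {y : ℕ},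
    y ∈ fvT (msubstT M θ) → ∃ z ∈ fvT M, y ∈ fvV (θ z)
  | .val V, θ, y, h => mem_fvV_msubstV V θ h
  | .app V U, θ, y, h => by
      simp only [msubstT, fvT, Finset.mem_union] at h
      rcases h with h | h
      · obtain ⟨z, hz, h⟩ := mem_fvV_msubstV V θ h
        exact ⟨z, Finset.mem_union_left _ hz, h⟩
      · obtain ⟨z, hz, h⟩ := mem_fvV_msubstV U θ h
        exact ⟨z, Finset.mem_union_right _ hz, h⟩
  | .choice M N, θ, y, h => by
      simp only [msubstT, fvT, Finset.mem_union] at h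
      rcases h with h | h
      · obtain ⟨z, hz, h⟩ := mem_fvT_msubstT M θ h
        exact ⟨z, Finset.mem_union_left _ hz, h⟩
      · obtain ⟨z, hz, h⟩ := mem_fvT_msubstT N θ h
        exact ⟨z, Finset.mem_union_right _ hz, h⟩
  | .letin z N M, θ, y, h => by
      simp only [msubstT, fvT, Finset.mem_union, Finset.mem_sdiff,
        Finset.mem_singleton] at h ⊢
      rcases h with h | ⟨h, hyz⟩
      · obtain ⟨u, hu, h⟩ := mem_fvT_msubstT N θ h
        exact ⟨u, Or.inl hu, h⟩
      · obtain ⟨u, hu, h⟩ := mem_fvT_msubstT M _ h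
        by_cases huz : u = z
        · subst huz
          simp [fvV, hyz] at h
        · exact ⟨u, Or.inr ⟨hu, huz⟩, by rwa [Function.update_of_ne huz] at h⟩
end

theorem closed_msubstV {V : Val} {θ : ℕ → Val} (h : ∀ z ∈ fvV V, (θ z).Closed) :
    (msubstV V θ).Closed := by
  refine Finset.eq_empty_iff_forall_notMem.mpr fun y hy => ?_
  obtain ⟨z, hz, hy⟩ := mem_fvV_msubstV V θ hy
  simp [show fvV (θ z) = ∅ from h z hz] at hy

theorem closed_msubstT {M : Tm} {θ : ℕ → Val} (h : ∀ z ∈ fvT M, (θ z).Closed) :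
    (msubstT M θ).Closed := by
  refine Finset.eq_empty_iff_forall_notMem.mpr fun y hy => ?_
  obtain ⟨z, hz, hy⟩ := mem_fvT_msubstT M θ hy
  simp [show fvV (θ z) = ∅ from h z hz] at hy

theorem fvT_msubstT_update_subset {M : Tm} {θ : ℕ → Val} {x : ℕ}
    (hθ : ∀ z, (θ z).Closed) :
    fvT (msubstT M (Function.update θ x (.var x))) ⊆ {x} := by
  intro y hy
  obtain ⟨z, -, hy⟩ := mem_fvT_msubstT M _ hy
  by_cases hzx : z = x
  · subst hzx
    simpa [fvV] using hy
  · simp [Function.update_of_ne hzx, show fvV (θ z) = ∅ from hθ z] at hy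

mutual
theorem substV_msubstV_update : ∀ (V : Val) (θ : ℕ → Val) (x : ℕ) {W : Val},
    W.Closed → (∀ z ∈ fvV V, z ≠ x → θ z = .var z ∨ (θ z).Closed) →
    substV (msubstV V (Function.update θ x (.var x))) x W = msubstV V (Function.update θ x W)
  | .var z, θ, x, W, hW, hθ => by
      by_cases hzx : z = x
      · subst hzx; simp [msubstV, substV]
      · simp only [msubstV, Function.update_of_ne hzx]
        rcases hθ z (by simp [fvV]) hzx with h | h
        · simp [h, substV, hzx]
        · exact substV_of_notMem _ W (by simp [show fvV (θ z) = ∅ from h])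
  | .lam z M, θ, x, W, hW, hθ => by
      by_cases hzx : z = x
      · subst hzx
        simp [msubstV, substV]
      · simp only [msubstV, substV, if_neg hzx]
        rw [Function.update_comm (Ne.symm hzx), Function.update_comm (Ne.symm hzx),
          substT_msubstT_update M _ x hW]
        intro u hu hux
        by_cases huz : u = z
        · subst huz; simp
        · rw [Function.update_of_ne huz]
          exact hθ u (mem_fvV_lam.mpr ⟨hu, huz⟩) hux
theorem substT_msubstT_update : ∀ (M : Tm) (θ : ℕ → Val) (x : ℕ) {W : Val},
    W.Closed → (∀ z ∈ fvT M, z ≠ x → θ z = .var z ∨ (θ z).Closed) →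
    substT (msubstT M (Function.update θ x (.var x))) x W = msubstT M (Function.update θ x W)
  | .val V, θ, x, W, hW, hθ => by
      simp only [msubstT, substT, substV_msubstV_update V θ x hW hθ]
  | .app V U, θ, x, W, hW, hθ => by
      simp only [fvT, Finset.mem_union] at hθ
      simp only [msubstT, substT, substV_msubstV_update V θ x hW fun z hz => hθ z (.inl hz),
        substV_msubstV_update U θ x hW fun z hz => hθ z (.inr hz)]
  | .choice M N, θ, x, W, hW, hθ => by
      simp only [fvT, Finset.mem_union] at hθ
      simp only [msubstT, substT, substT_msubstT_update M θ x hW fun z hz => hθ z (.inl hz),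
        substT_msubstT_update N θ x hW fun z hz => hθ z (.inr hz)]
  | .letin z N M, θ, x, W, hW, hθ => by
      simp only [fvT, Finset.mem_union, Finset.mem_sdiff, Finset.mem_singleton] at hθ
      have hN := substT_msubstT_update N θ x hW fun u hu => hθ u (.inl hu)
      by_cases hzx : z = x
      · subst hzx
        simp [msubstT, substT, hN]
      · simp only [msubstT, substT, if_neg hzx, hN]
        rw [Function.update_comm (Ne.symm hzx), Function.update_comm (Ne.symm hzx),
          substT_msubstT_update M _ x hW]
        intro u hu hux
        by_cases huz : u = z
        · subst huz; simp
        · rw [Function.update_of_ne huz]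
          exact hθ u (.inr ⟨hu, huz⟩) hux
end

mutual
theorem msubstV_eq_self : ∀ (V : Val) (θ : ℕ → Val), (∀ z ∈ fvV V, θ z = .var z) →
    msubstV V θ = V
  | .var z, θ, h => h z (by simp [fvV])
  | .lam z M, θ, h => by
      rw [msubstV, msubstT_eq_self M]
      intro u hu
      by_cases huz : u = z
      · subst huz; simp
      · rw [Function.update_of_ne huz]
        exact h u (mem_fvV_lam.mpr ⟨hu, huz⟩)
theorem msubstT_eq_self : ∀ (M : Tm) (θ : ℕ → Val), (∀ z ∈ fvT M, θ z = .var z) →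
    msubstT M θ = M
  | .val V, θ, h => by rw [msubstT, msubstV_eq_self V θ h]
  | .app V U, θ, h => by
      simp only [fvT, Finset.mem_union] at h
      rw [msubstT, msubstV_eq_self V θ fun z hz => h z (.inl hz),
        msubstV_eq_self U θ fun z hz => h z (.inr hz)]
  | .choice M N, θ, h => by
      simp only [fvT, Finset.mem_union] at h
      rw [msubstT, msubstT_eq_self M θ fun z hz => h z (.inl hz),
        msubstT_eq_self N θ fun z hz => h z (.inr hz)]
  | .letin z N M, θ, h => by
      simp only [fvT, Finset.mem_union, Finset.mem_sdiff, Finset.mem_singleton] at h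
      rw [msubstT, msubstT_eq_self N θ fun u hu => h u (.inl hu), msubstT_eq_self M]
      intro u hu
      by_cases huz : u = z
      · subst huz; simp
      · rw [Function.update_of_ne huz]
        exact h u (.inr ⟨hu, huz⟩)
end

theorem msubstT_of_closed {M : Tm} (hM : M.Closed) (θ : ℕ → Val) : msubstT M θ = M :=
  msubstT_eq_self M θ fun z hz => by simp [show fvT M = ∅ from hM] at hz

def mass (m : MDist) : ℚ := (m.map Prod.fst).sum

theorem mass_add (a b : MDist) : mass (a + b) = mass a + mass b := by
  simp [mass]

theorem mass_scaleM (q : ℚ) (m : MDist) : mass (scaleM q m) = q * mass m := by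
  simp [mass, scaleM, Multiset.sum_map_mul_left]

theorem scaleM_one (m : MDist) : scaleM 1 m = m := by
  simp [scaleM]

theorem scaleM_singleton (q : ℚ) (p : ℚ × Tm) : scaleM q {p} = {(q * p.1, p.2)} := by
  simp [scaleM]

theorem Tm.eq_val_or_isVal_eq_false (M : Tm) : (∃ V, M = .val V) ∨ M.isVal = false := by
  cases M <;> simp [Tm.isVal]

theorem normV_add (a b : MDist) : normV (a + b) = normV a + normV b := by
  simp [normV, Multiset.filter_add]

theorem normV_scaleM (q : ℚ) (m : MDist) : normV (scaleM q m) = q * normV m := by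
  simp [normV, scaleM, Multiset.filter_map, Multiset.sum_map_mul_left]

theorem normV_sum (ms : Multiset MDist) : normV ms.sum = (ms.map normV).sum :=
  map_multiset_sum (AddMonoidHom.mk' normV normV_add) ms

theorem normV_le_mass (m : MDist) (h : ∀ p ∈ m, 0 ≤ p.1) : normV m ≤ mass m := by
  have hsplit := congrArg mass (Multiset.filter_add_not (fun p : ℚ × Tm => p.2.isVal = true) m)
  rw [mass_add] at hsplit
  have : 0 ≤ mass (m.filter fun p => ¬ p.2.isVal = true) :=
    Multiset.sum_nonneg fun q hq => by
      obtain ⟨p, hp, rfl⟩ := Multiset.mem_map.mp hq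
      exact h p (Multiset.mem_of_mem_filter hp)
  change mass (m.filter fun p => p.2.isVal = true) ≤ mass m
  linarith

theorem mass_stepF (M : Tm) : mass (stepF M) = 1 := by
  fun_induction stepF M <;> simp_all [mass, Multiset.map_map, ← two_mul]

theorem stepF_nonneg (M : Tm) : ∀ p ∈ stepF M, 0 ≤ p.1 := by
  fun_induction stepF M with
  | case6 x N M _ ih =>
      simp only [Multiset.mem_map]
      rintro _ ⟨p, hp, rfl⟩
      exact ih p hp
  | _ => simp

theorem closed_letin_iff {x : ℕ} {N M : Tm} :
    (Tm.letin x N M).Closed ↔ N.Closed ∧ fvT M ⊆ {x} := by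
  simp [Tm.Closed, fvT]

theorem closed_stepF {M : Tm} (hM : M.Closed) : ∀ p ∈ stepF M, p.2.Closed := by
  fun_induction stepF M with
  | case1 V => simpa [stepF] using hM
  | case2 x B W =>
      simp only [Tm.Closed, fvT, fvV, Finset.union_eq_empty, Finset.sdiff_eq_empty_iff_subset] at hM
      simpa [stepF] using closed_substT hM.1 hM.2
  | case3 y W => simp [Tm.Closed, fvT, fvV] at hM
  | case4 M N => simp_all [Tm.Closed, fvT]
  | case5 x V M =>
      rw [closed_letin_iff] at hM
      simpa [stepF] using closed_substT hM.2 hM.1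
  | case6 x N M _ ih =>
      rw [closed_letin_iff] at hM
      simp only [Multiset.mem_map]
      rintro _ ⟨p, hp, rfl⟩
      exact closed_letin_iff.mpr ⟨ih hM.1 p hp, hM.2⟩

theorem mstepF_add (a b : MDist) : mstepF (a + b) = mstepF a + mstepF b := by
  simp [mstepF]

theorem mstepF_scaleM (q : ℚ) (m : MDist) : mstepF (scaleM q m) = scaleM q (mstepF m) := by
  induction m using Multiset.induction_on with
  | empty => rfl
  | cons p m ih =>
      simp only [mstepF, scaleM, Multiset.map_cons, Multiset.sum_cons] at ih ⊢
      rw [ih, Multiset.map_add, Multiset.map_map]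
      simp [mul_assoc]

theorem mass_mstepF (m : MDist) : mass (mstepF m) = mass m := by
  induction m using Multiset.induction_on with
  | empty => rfl
  | cons p m ih =>
      rw [← Multiset.singleton_add, mstepF_add, mass_add, mass_add, ih]
      simp only [mstepF, Multiset.map_singleton, Multiset.sum_singleton, mass_scaleM, mass_stepF,
        mul_one]
      simp [mass]

theorem mstepF_nonneg {m : MDist} (h : ∀ p ∈ m, 0 ≤ p.1) : ∀ p ∈ mstepF m, 0 ≤ p.1 := by
  intro p hp
  obtain ⟨_, hm, hp⟩ := Multiset.mem_join.mp hp
  obtain ⟨q, hq, rfl⟩ := Multiset.mem_map.mp hm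
  obtain ⟨r, hr, rfl⟩ := Multiset.mem_map.mp hp
  exact mul_nonneg (h q hq) (stepF_nonneg q.2 r hr)

theorem iterate_mstepF_add (k : ℕ) (a b : MDist) :
    mstepF^[k] (a + b) = mstepF^[k] a + mstepF^[k] b := by
  induction k generalizing a b with
  | zero => rfl
  | succ k ih => simp only [Function.iterate_succ_apply, mstepF_add, ih]

theorem iterate_mstepF_scaleM (k : ℕ) (q : ℚ) (m : MDist) :
    mstepF^[k] (scaleM q m) = scaleM q (mstepF^[k] m) :=
  Function.Commute.iterate_left (fun m => mstepF_scaleM q m) k m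

theorem traj_succ (M : Tm) (k : ℕ) : traj M (k + 1) = mstepF (traj M k) :=
  Function.iterate_succ_apply' _ _ _

theorem iterate_mstepF_eq_sum (k : ℕ) (m : MDist) :
    mstepF^[k] m = (m.map fun p => scaleM p.1 (traj p.2 k)).sum := by
  induction m using Multiset.induction_on with
  | empty => exact Function.iterate_fixed rfl k
  | cons p m ih =>
      have hp : mstepF^[k] {p} = scaleM p.1 (traj p.2 k) := by
        rw [traj, ← iterate_mstepF_scaleM, scaleM_singleton, mul_one]
      rw [← Multiset.singleton_add, iterate_mstepF_add, ih, hp]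
      simp

theorem traj_succ_eq_sum (M : Tm) (k : ℕ) :
    traj M (k + 1) = ((stepF M).map fun p => scaleM p.1 (traj p.2 k)).sum := by
  rw [traj, Function.iterate_succ_apply, ← iterate_mstepF_eq_sum]
  simp [mstepF, scaleM_one]

theorem mass_traj (M : Tm) (k : ℕ) : mass (traj M k) = 1 := by
  induction k with
  | zero => simp [traj, mass]
  | succ k ih => rw [traj_succ, mass_mstepF, ih]

theorem traj_nonneg (M : Tm) (k : ℕ) : ∀ p ∈ traj M k, 0 ≤ p.1 := by
  induction k with
  | zero => simp [traj]
  | succ k ih => exact traj_succ M k ▸ mstepF_nonneg ih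

theorem evalP_le_one (k : ℕ) (M : Tm) : evalP k M ≤ 1 :=
  mass_traj M k ▸ normV_le_mass _ (traj_nonneg M k)

theorem evalP_zero_of_isVal_eq_false {M : Tm} (h : M.isVal = false) : evalP 0 M = 0 := by
  simp [evalP, traj, normV, Multiset.filter_singleton, h]

theorem evalP_val (k : ℕ) (V : Val) : evalP k (.val V) = 1 := by
  have : traj (.val V) k = {(1, .val V)} := by
    induction k with
    | zero => rfl
    | succ k ih => simp [traj_succ, ih, mstepF, stepF, scaleM_singleton]
  simp [evalP, this, normV, Multiset.filter_singleton, Tm.isVal]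

theorem evalP_succ (k : ℕ) (M : Tm) :
    evalP (k + 1) M = ((stepF M).map fun p => p.1 * evalP k p.2).sum := by
  simp [evalP, traj_succ_eq_sum, normV_sum, normV_scaleM]

theorem one_sub_evalP_succ (k : ℕ) (M : Tm) :
    1 - evalP (k + 1) M = ((stepF M).map fun p => p.1 * (1 - evalP k p.2)).sum := by
  simp only [mul_sub, mul_one, Multiset.sum_map_sub, evalP_succ]
  rw [← mass, mass_stepF]

theorem etime_zero (M : Tm) : etime 0 M = 0 := rfl

theorem etime_succ (k : ℕ) (M : Tm) : etime (k + 1) M = etime k M + (1 - evalP k M) :=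
  Finset.sum_range_succ _ _

theorem etime_mono {k l : ℕ} (h : k ≤ l) (M : Tm) : etime k M ≤ etime l M :=
  Finset.sum_le_sum_of_subset_of_nonneg (Finset.range_mono h)
    fun j _ _ => sub_nonneg.mpr (evalP_le_one j M)

theorem etime_val (k : ℕ) (V : Val) : etime k (.val V) = 0 := by
  simp [etime, evalP_val]

theorem etime_succ_eq_sum (k : ℕ) (M : Tm) :
    etime (k + 1) M = (1 - evalP 0 M) + ((stepF M).map fun p => p.1 * etime k p.2).sum := by
  induction k with
  | zero => simp [etime_succ, etime_zero]
  | succ k ih =>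
      rw [etime_succ, ih, one_sub_evalP_succ, add_assoc, ← Multiset.sum_map_add]
      simp only [etime_succ, mul_add]

theorem etime_succ_of_isVal_eq_false {M : Tm} (h : M.isVal = false) (k : ℕ) :
    etime (k + 1) M = 1 + ((stepF M).map fun p => p.1 * etime k p.2).sum := by
  rw [etime_succ_eq_sum, evalP_zero_of_isVal_eq_false h, sub_zero]

theorem stepF_letin_of_isVal_eq_false {x : ℕ} {N M : Tm} (h : N.isVal = false) :
    stepF (.letin x N M) = (stepF N).map fun p => (p.1, Tm.letin x p.2 M) := by
  cases N <;> first | rfl | simp [Tm.isVal] at h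

theorem etime_letin_succ {N : Tm} (hN : N.isVal = false) (x : ℕ) (M : Tm) (k : ℕ) :
    etime (k + 1) (.letin x N M)
      = 1 + ((stepF N).map fun p => p.1 * etime k (.letin x p.2 M)).sum := by
  rw [etime_succ_of_isVal_eq_false rfl, stepF_letin_of_isVal_eq_false hN, Multiset.map_map]
  rfl

theorem etime_letin_val_succ (x : ℕ) (V : Val) (M : Tm) (k : ℕ) :
    etime (k + 1) (.letin x (.val V) M) = 1 + etime k (substT M x V) := by
  rw [etime_succ_of_isVal_eq_false rfl]
  simp [stepF]

theorem etime_letin_app_lam_succ (y x : ℕ) (B : Tm) (W : Val) (Mc : Tm) (k : ℕ) :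
    etime (k + 1) (.letin y (.app (.lam x B) W) Mc) = 1 + etime k (.letin y (substT B x W) Mc) := by
  rw [etime_letin_succ rfl]
  simp [stepF]

theorem etime_letin_choice_succ (x : ℕ) (M N Mc : Tm) (k : ℕ) :
    etime (k + 1) (.letin x (.choice M N) Mc)
      = 1 + (etime k (.letin x M Mc) / 2 + etime k (.letin x N Mc) / 2) := by
  rw [etime_letin_succ rfl]
  simp [stepF, div_eq_inv_mul]

theorem etime_letin_var_succ (y : ℕ) (M : Tm) (k : ℕ) :
    etime (k + 1) (.letin y M (.val (.var y))) = 1 + etime k M := by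
  induction k generalizing M with
  | zero =>
      rw [etime_succ, evalP_zero_of_isVal_eq_false rfl]
      simp [etime_zero]
  | succ k ih =>
      rcases M.eq_val_or_isVal_eq_false with ⟨V, rfl⟩ | hM
      · simp [etime_letin_val_succ, substT, substV, etime_val]
      · rw [etime_letin_succ hM, etime_succ_of_isVal_eq_false hM]
        simp only [ih, mul_add, mul_one, Multiset.sum_map_add]
        rw [← mass, mass_stepF]

theorem substT_letin_of_fvT_subset {x y : ℕ} {Mb Mc : Tm} (hMc : fvT Mc ⊆ {y}) (V : Val) :
    substT (.letin y Mb Mc) x V = .letin y (substT Mb x V) Mc := by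
  by_cases hyx : y = x
  · simp [substT, hyx]
  · simp only [substT, if_neg hyx,
      substT_of_notMem Mc V fun hx => hyx (Finset.mem_singleton.mp (hMc hx)).symm]

theorem etime_letin_letin {x y : ℕ} {Mc : Tm} (hMc : fvT Mc ⊆ {y}) (M : Tm) (k : ℕ) (N : Tm) :
    etime k (.letin y (.letin x N M) Mc) = etime k (.letin x N (.letin y M Mc)) := by
  induction k generalizing N with
  | zero => rfl
  | succ k ih =>
      rcases N.eq_val_or_isVal_eq_false with ⟨V, rfl⟩ | hN
      · rw [etime_letin_val_succ, substT_letin_of_fvT_subset hMc, etime_letin_succ rfl]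
        simp [stepF]
      · rw [etime_letin_succ rfl, stepF_letin_of_isVal_eq_false hN, etime_letin_succ hN,
          Multiset.map_map]
        simp only [Function.comp_def, ih]

theorem exists_uniform_etime {α : Type*} (m : Multiset α) (g : α → ℚ) (F : α → Tm)
    (h : ∀ a ∈ m, ∃ k, g a ≤ etime k (F a)) :
    ∃ K, ∀ a ∈ m, g a ≤ etime K (F a) := by
  induction m using Multiset.induction_on with
  | empty => exact ⟨0, by simp⟩
  | cons a m ih =>
      obtain ⟨K₁, hK₁⟩ := ih fun b hb => h b (Multiset.mem_cons_of_mem hb)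
      obtain ⟨K₂, hK₂⟩ := h a (Multiset.mem_cons_self _ _)
      refine ⟨max K₁ K₂, fun b hb => ?_⟩
      rcases Multiset.mem_cons.mp hb with rfl | hb
      · exact hK₂.trans (etime_mono (le_max_right _ _) _)
      · exact (hK₁ b hb).trans (etime_mono (le_max_left _ _) _)

def Baseline (y : ℕ) (Mc : Tm) (c : ℚ) : Prop :=
  fvT Mc ⊆ {y} ∧ 0 ≤ c ∧
    ∀ V : Val, V.Closed → ∃ k, c ≤ etime k (.letin y (.val V) Mc)

/-- Each reduction step of the plugged term earns `1`, so after `n` steps the context has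
earned `min n c` whether or not the term has reached a value. -/
theorem Baseline.exists_le_etime {y : ℕ} {Mc : Tm} {c : ℚ} (h : Baseline y Mc c) {P : Tm}
    (hP : P.Closed) : ∃ k, c ≤ etime k (.letin y P Mc) := by
  suffices ∀ n : ℕ, ∀ P : Tm, P.Closed →
      ∃ k, min (n : ℚ) c ≤ etime k (.letin y P Mc) by
    obtain ⟨k, hk⟩ := this ⌈c⌉₊ P hP
    exact ⟨k, (min_eq_right (Nat.le_ceil c)).symm.le.trans hk⟩
  intro n
  induction n with
  | zero => exact fun P _ => ⟨0, by simp [etime_zero, h.2.1]⟩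
  | succ n ih =>
      intro P hP
      rcases P.eq_val_or_isVal_eq_false with ⟨V, rfl⟩ | hv
      · obtain ⟨k, hk⟩ := h.2.2 V hP
        exact ⟨k, (min_le_right _ _).trans hk⟩
      obtain ⟨K, hK⟩ := exists_uniform_etime (stepF P) (fun _ => min (n : ℚ) c)
        (fun p => .letin y p.2 Mc) fun p hp => ih p.2 (closed_stepF hP p hp)
      refine ⟨K + 1, ?_⟩
      have hsum :
          min (n : ℚ) c ≤ ((stepF P).map fun p => p.1 * etime K (.letin y p.2 Mc)).sum :=
        calc min (n : ℚ) c = ((stepF P).map fun p => p.1 * min (n : ℚ) c).sum := by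
              rw [Multiset.sum_map_mul_right, ← mass, mass_stepF, one_mul]
          _ ≤ _ := Multiset.sum_map_le_sum_map _ _ fun p hp =>
              mul_le_mul_of_nonneg_left (hK p hp) (stepF_nonneg P p hp)
      rw [etime_letin_succ hv]
      push_cast
      have : min ((n : ℚ) + 1) c ≤ 1 + min (n : ℚ) c := by
        rw [← min_add_add_left]
        exact min_le_min (by linarith) (by linarith)
      linarith

theorem sizeOf_lt_of_mem_ITy {q : ℚ} {X : ATy} {A : ITy} (h : (q, X) ∈ A) :
    sizeOf X < sizeOf A := by
  have := List.sizeOf_lt_of_mem h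
  simp only [Prod.mk.sizeOf_spec] at this
  omega

theorem sizeOf_lt_of_mem_DTy {p : ℚ} {A : ITy} {b : DTy} (h : (p, A) ∈ b) :
    sizeOf A < sizeOf b := by
  have := List.sizeOf_lt_of_mem h
  simp only [Prod.mk.sizeOf_spec] at this
  omega

/-- `RealI` and `RealT` below are unfolded in this definition, so that the recursion is on the
size of the type. -/
def RealV : ATy → Val → ℚ → Prop
  | .arr A b => fun V v =>
      V.Closed ∧ ∀ (W : Val) (u : ℚ),
        (W.Closed ∧ ∃ L : List (ℚ × ATy × ℚ), ∃ _hL : L.map (fun z => (z.1, z.2.1)) = A,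
          (∀ z, ∀ _hz : z ∈ L, RealV z.2.1 W z.2.2) ∧
          u ≤ (L.map fun z => z.1 * z.2.2).sum) →
        ∀ (y : ℕ) (Mc : Tm) (c : ℚ) (T : List (ℚ × ITy × ℚ)), Baseline y Mc c →
          ∀ _hT : T.map (fun z => (z.1, z.2.1)) = b,
          (∀ z, ∀ _hz : z ∈ T, ∀ (V' : Val) (u' : ℚ),
            (V'.Closed ∧ ∃ L' : List (ℚ × ATy × ℚ),
              ∃ _hL' : L'.map (fun z' => (z'.1, z'.2.1)) = z.2.1,
              (∀ z', ∀ _hz' : z' ∈ L', RealV z'.2.1 V' z'.2.2) ∧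
              u' ≤ (L'.map fun z' => z'.1 * z'.2.2).sum) →
            ∃ k, c + z.2.2 + u' ≤ etime k (.letin y (.val V') Mc)) →
          ∃ k, v + u + c + (T.map fun z => z.1 * z.2.2).sum ≤ etime k (.letin y (.app V W) Mc)
termination_by X => sizeOf X
decreasing_by
  · have := sizeOf_lt_of_mem_ITy (_hL ▸ List.mem_map_of_mem _hz)
    simp only [ATy.arr.sizeOf_spec]
    omega
  · have := sizeOf_lt_of_mem_DTy (_hT ▸ List.mem_map_of_mem _hz)
    have := sizeOf_lt_of_mem_ITy (_hL' ▸ List.mem_map_of_mem _hz')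
    simp only [ATy.arr.sizeOf_spec]
    omega

/-- `RealI A V u`: each component `q • X` of `A` is realized by `V` with some weight `v`, and
`u ≤ ∑ q * v`. -/
def RealI (A : ITy) (V : Val) (u : ℚ) : Prop :=
  V.Closed ∧ ∃ L : List (ℚ × ATy × ℚ), ∃ _hL : L.map (fun z => (z.1, z.2.1)) = A,
    (∀ z, ∀ _hz : z ∈ L, RealV z.2.1 V z.2.2) ∧ u ≤ (L.map fun z => z.1 * z.2.2).sum

def RealK (y : ℕ) (Mc : Tm) (c : ℚ) (A : ITy) (t : ℚ) : Prop :=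
  ∀ (V : Val) (u : ℚ), RealI A V u → ∃ k, c + t + u ≤ etime k (.letin y (.val V) Mc)

/-- `RealT b M w`: plugged into a context that earns `tᵢ` on the `i`-th component `pᵢ 𝒜ᵢ`
of `b`, the term `M` makes the context earn `w + ∑ pᵢ tᵢ` on top of its baseline. -/
def RealT (b : DTy) (M : Tm) (w : ℚ) : Prop :=
  ∀ (y : ℕ) (Mc : Tm) (c : ℚ) (T : List (ℚ × ITy × ℚ)), Baseline y Mc c →
    ∀ _hT : T.map (fun z => (z.1, z.2.1)) = b,
    (∀ z, ∀ _hz : z ∈ T, RealK y Mc c z.2.1 z.2.2) →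
    ∃ k, w + c + (T.map fun z => z.1 * z.2.2).sum ≤ etime k (.letin y M Mc)

theorem RealV_arr {A : ITy} {b : DTy} {V : Val} {v : ℚ} :
    RealV (.arr A b) V v ↔
      V.Closed ∧ ∀ (W : Val) (u : ℚ), RealI A W u → RealT b (.app V W) (v + u) := by
  rw [RealV]
  rfl

theorem RealI.closed {A : ITy} {V : Val} {u : ℚ} (h : RealI A V u) : V.Closed := h.1

theorem RealV.mono {X : ATy} {V : Val} {v v' : ℚ} (h : RealV X V v) (hle : v' ≤ v) :
    RealV X V v' := by
  obtain ⟨A, b⟩ := X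
  rw [RealV_arr] at h ⊢
  refine ⟨h.1, fun W u hWu y Mc c T hc hT hK => ?_⟩
  obtain ⟨k, hk⟩ := h.2 W u hWu y Mc c T hc hT hK
  exact ⟨k, by linarith⟩

theorem RealI.mono {A : ITy} {V : Val} {u u' : ℚ} (h : RealI A V u) (hle : u' ≤ u) :
    RealI A V u' := by
  obtain ⟨hc, L, hL, hr, hu⟩ := h
  exact ⟨hc, L, hL, hr, hle.trans hu⟩

theorem RealT.mono {b : DTy} {M : Tm} {w w' : ℚ} (h : RealT b M w) (hle : w' ≤ w) :
    RealT b M w' := by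
  intro y Mc c T hc hT hK
  obtain ⟨k, hk⟩ := h y Mc c T hc hT hK
  exact ⟨k, by linarith⟩

theorem RealI_nil {V : Val} {u : ℚ} : RealI [] V u ↔ V.Closed ∧ u ≤ 0 := by
  constructor
  · rintro ⟨hc, L, hL, -, hu⟩
    obtain rfl := List.map_eq_nil_iff.mp hL
    exact ⟨hc, by simpa using hu⟩
  · rintro ⟨hc, hu⟩
    exact ⟨hc, [], rfl, by simp, by simpa using hu⟩

theorem RealI.le_zero_of_nil {V : Val} {u : ℚ} (h : RealI [] V u) : u ≤ 0 := (RealI_nil.mp h).2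

theorem RealI.realV_of_singleton {X : ATy} {V : Val} {u : ℚ} (h : RealI [(1, X)] V u) :
    RealV X V u := by
  obtain ⟨-, L, hL, hr, hu⟩ := h
  obtain ⟨z, rfl⟩ : ∃ z, L = [z] :=
    List.length_eq_one_iff.mp (by simpa using congrArg List.length hL)
  obtain ⟨hz1, hz2⟩ := Prod.mk.inj (List.singleton_inj.mp hL)
  refine hz2 ▸ (hr z (List.mem_singleton_self z)).mono ?_
  simpa [hz1] using hu

theorem RealI_append {A B : ITy} {V : Val} {u : ℚ} (h : RealI (A ++ B) V u) :
    ∃ uA uB, RealI A V uA ∧ RealI B V uB ∧ u ≤ uA + uB := by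
  obtain ⟨hc, L, hL, hr, hu⟩ := h
  obtain ⟨L₁, L₂, rfl, h₁, h₂⟩ := List.map_eq_append_iff.mp hL
  refine ⟨_, _, ⟨hc, L₁, h₁, fun z hz => hr z (List.mem_append_left _ hz), le_rfl⟩,
    ⟨hc, L₂, h₂, fun z hz => hr z (List.mem_append_right _ hz), le_rfl⟩, ?_⟩
  simpa using hu

theorem exists_map_eq_of_map_eq_scaleL {α : Type} {β : Type*} {q : ℚ} {A : List (ℚ × α)}
    {L : List (ℚ × α × β)} (h : L.map (fun z => (z.1, z.2.1)) = scaleL q A) :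
    ∃ L' : List (ℚ × α × β), L'.map (fun z => (z.1, z.2.1)) = A ∧
      L = L'.map fun z => (q * z.1, z.2) := by
  induction A generalizing L with
  | nil => exact ⟨[], rfl, List.map_eq_nil_iff.mp h⟩
  | cons a A ih =>
      obtain ⟨z, L, rfl, hz, hL⟩ := List.map_eq_cons_iff.mp h
      obtain ⟨L', hL', rfl⟩ := ih hL
      obtain ⟨hz1, hz2⟩ := Prod.mk.inj hz
      exact ⟨(a.1, a.2, z.2.2) :: L', by simp [hL'], by simp [← hz1, ← hz2]⟩

theorem RealI_scaleL {q : ℚ} {A : ITy} {V : Val} {u : ℚ} (h : RealI (scaleL q A) V u) :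
    ∃ u', RealI A V u' ∧ u ≤ q * u' := by
  obtain ⟨hc, L, hL, hr, hu⟩ := h
  obtain ⟨L', hL', rfl⟩ := exists_map_eq_of_map_eq_scaleL hL
  refine ⟨_, ⟨hc, L', hL', fun z hz => hr (q * z.1, z.2) (List.mem_map_of_mem hz), le_rfl⟩,
    ?_⟩
  simpa [Function.comp_def, mul_assoc, List.sum_map_mul_left] using hu

theorem RealT_nil {M : Tm} (hM : M.Closed) : RealT [] M 0 := by
  intro y Mc c T hc hT _
  obtain rfl := List.map_eq_nil_iff.mp hT
  obtain ⟨k, hk⟩ := hc.exists_le_etime hM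
  exact ⟨k, by simpa using hk⟩

theorem RealT_val {A : ITy} {V : Val} {u : ℚ} (h : RealI A V u) : RealT [(1, A)] (.val V) u := by
  intro y Mc c T _ hT hK
  obtain ⟨z, T, rfl, hz, hT⟩ := List.map_eq_cons_iff.mp hT
  obtain rfl := List.map_eq_nil_iff.mp hT
  obtain ⟨hz1, hz2⟩ := Prod.mk.inj hz
  obtain ⟨k, hk⟩ := hK z List.mem_cons_self V u (hz2 ▸ h)
  exact ⟨k, by simp only [List.map_cons, List.map_nil, List.sum_singleton, hz1]; linarith⟩

theorem RealT_app_lam {x : ℕ} {B : Tm} {W : Val} {b : DTy} {w : ℚ}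
    (h : RealT b (substT B x W) w) : RealT b (.app (.lam x B) W) (w + 1) := by
  intro y Mc c T hc hT hK
  obtain ⟨k, hk⟩ := h y Mc c T hc hT hK
  exact ⟨k + 1, by rw [etime_letin_app_lam_succ]; linarith⟩

theorem sum_map_scale {α : Type*} (q : ℚ) (L : List (ℚ × α × ℚ)) :
    ((L.map fun z => (q * z.1, z.2)).map fun z => z.1 * z.2.2).sum
      = q * (L.map fun z => z.1 * z.2.2).sum := by
  simp [Function.comp_def, mul_assoc, List.sum_map_mul_left]

theorem RealT_choice {a b : DTy} {M N : Tm} {w v : ℚ} (hM : RealT a M w) (hN : RealT b N v) :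
    RealT (scaleL (1/2) a ++ scaleL (1/2) b) (.choice M N) (w / 2 + v / 2 + 1) := by
  intro y Mc c T hc hT hK
  obtain ⟨T₁, T₂, rfl, h₁, h₂⟩ := List.map_eq_append_iff.mp hT
  obtain ⟨T₁, hT₁, rfl⟩ := exists_map_eq_of_map_eq_scaleL h₁
  obtain ⟨T₂, hT₂, rfl⟩ := exists_map_eq_of_map_eq_scaleL h₂
  obtain ⟨k₁, hk₁⟩ := hM y Mc c T₁ hc hT₁ fun z hz =>
    hK (1/2 * z.1, z.2)
      (List.mem_append_left _ (List.mem_map_of_mem (f := fun z => (1/2 * z.1, z.2)) hz))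
  obtain ⟨k₂, hk₂⟩ := hN y Mc c T₂ hc hT₂ fun z hz =>
    hK (1/2 * z.1, z.2)
      (List.mem_append_right _ (List.mem_map_of_mem (f := fun z => (1/2 * z.1, z.2)) hz))
  refine ⟨max k₁ k₂ + 1, ?_⟩
  rw [etime_letin_choice_succ, List.map_append, List.sum_append, sum_map_scale, sum_map_scale]
  have := etime_mono (le_max_left k₁ k₂) (.letin y M Mc)
  have := etime_mono (le_max_right k₁ k₂) (.letin y N Mc)
  linarith

theorem Baseline.letin {x y : ℕ} {Mb Mc : Tm} {c : ℚ} (hc : Baseline y Mc c)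
    (hMb : fvT Mb ⊆ {x}) : Baseline x (.letin y Mb Mc) (c + 1) := by
  refine ⟨?_, by linarith [hc.2.1], fun V hV => ?_⟩
  · simpa only [fvT, Finset.sdiff_eq_empty_iff_subset.mpr hc.1, Finset.union_empty] using hMb
  · obtain ⟨k, hk⟩ := hc.exists_le_etime (closed_substT hMb hV)
    exact ⟨k + 1, by rw [etime_letin_val_succ, substT_letin_of_fvT_subset hc.1]; linarith⟩

/-- Through the body `Mb`, tests for the result of `let x = N in Mb` in the context
`let y = [·] in Mc` become tests for `N` in the context `let x = [·] in (let y = Mb in Mc)`. -/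
theorem exists_realK_letin {x y : ℕ} {Mb Mc : Tm} {c : ℚ} (hc : Baseline y Mc c) :
    ∀ (J : List (ℚ × ITy × ℚ × DTy)) (T : List (ℚ × ITy × ℚ)),
    T.map (fun z => (z.1, z.2.1)) = (J.map fun j => scaleL j.1 j.2.2.2).flatten →
    (∀ z ∈ T, RealK y Mc c z.2.1 z.2.2) →
    (∀ j ∈ J, ∀ (V : Val) (u : ℚ), RealI j.2.1 V u →
      RealT j.2.2.2 (substT Mb x V) (j.2.2.1 + u)) →
    ∃ TN : List (ℚ × ITy × ℚ),
      TN.map (fun z => (z.1, z.2.1)) = J.map (fun j => (j.1, j.2.1)) ∧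
      (∀ z ∈ TN, RealK x (.letin y Mb Mc) (c + 1) z.2.1 z.2.2) ∧
      (TN.map fun z => z.1 * z.2.2).sum
        = (J.map fun j => j.1 * j.2.2.1).sum + (T.map fun z => z.1 * z.2.2).sum
  | [], T, hT, _, _ => ⟨[], rfl, by simp, by simp [List.map_eq_nil_iff.mp hT]⟩
  | j :: J, T, hT, hK, hJ => by
      obtain ⟨T₁, T₂, rfl, h₁, h₂⟩ := List.map_eq_append_iff.mp hT
      obtain ⟨T₁, hT₁, rfl⟩ := exists_map_eq_of_map_eq_scaleL h₁
      obtain ⟨TN, hTN, hKN, hsum⟩ := exists_realK_letin hc J T₂ h₂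
        (fun z hz => hK z (List.mem_append_right _ hz))
        fun j hj => hJ j (List.mem_cons_of_mem _ hj)
      refine ⟨(j.1, j.2.1, j.2.2.1 + (T₁.map fun z => z.1 * z.2.2).sum) :: TN,
        by simp [hTN], ?_, ?_⟩
      · rintro z (_ | ⟨_, hz⟩)
        · intro V u hV
          obtain ⟨k, hk⟩ := hJ j List.mem_cons_self V u hV y Mc c T₁ hc hT₁ fun z hz =>
            hK (j.1 * z.1, z.2) (List.mem_append_left _ (List.mem_map_of_mem
              (f := fun z => (j.1 * z.1, z.2)) hz))
          exact ⟨k + 1, by rw [etime_letin_val_succ, substT_letin_of_fvT_subset hc.1]; linarith⟩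
        · exact hKN z hz
      · simp only [List.map_cons, List.sum_cons, hsum, List.map_append, List.sum_append,
          sum_map_scale]
        ring

theorem RealT_letin {x : ℕ} {N Mb : Tm} {J : List (ℚ × ITy × ℚ × DTy)} {v : ℚ}
    (hMb : fvT Mb ⊆ {x}) (hN : RealT (J.map fun j => (j.1, j.2.1)) N v)
    (hJ : ∀ j ∈ J, ∀ (V : Val) (u : ℚ), RealI j.2.1 V u →
      RealT j.2.2.2 (substT Mb x V) (j.2.2.1 + u)) :
    RealT ((J.map fun j => scaleL j.1 j.2.2.2).flatten) (.letin x N Mb)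
      ((J.map fun j => j.1 * j.2.2.1).sum + v + 1) := by
  intro y Mc c T hc hT hK
  obtain ⟨TN, hTN, hKN, hsum⟩ := exists_realK_letin hc J T hT hK hJ
  obtain ⟨k, hk⟩ := hN x (.letin y Mb Mc) (c + 1) TN (hc.letin hMb) hTN hKN
  exact ⟨k, by rw [etime_letin_letin hc.1]; linarith⟩

theorem Baseline.var (y : ℕ) : Baseline y (.val (.var y)) 1 := by
  refine ⟨by simp [fvT, fvV], zero_le_one, fun V _ => ⟨1, ?_⟩⟩
  rw [etime_succ, evalP_zero_of_isVal_eq_false rfl]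
  simp [etime_zero]

theorem RealT.exists_le_etime {M : Tm} {w : ℚ} (h : RealT [] M w) : ∃ k, w ≤ etime k M := by
  obtain ⟨k, hk⟩ := h 0 _ 1 [] (Baseline.var 0) rfl (by simp)
  simp only [List.map_nil, List.sum_nil, add_zero] at hk
  cases k with
  | zero => exact ⟨0, by rw [etime_zero] at hk ⊢; linarith⟩
  | succ k => exact ⟨k, by rw [etime_letin_var_succ] at hk; linarith⟩

def RealCtx (Γ : Ctx) (θ : ℕ → Val) (r : ℚ) : Prop :=
  ∃ (s : Finset ℕ) (u : ℕ → ℚ), (∀ y ∉ s, Γ y = []) ∧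
    (∀ y ∈ s, RealI (Γ y) (θ y) (u y)) ∧ r ≤ ∑ y ∈ s, u y

namespace RealCtx

variable {Γ Δ : Ctx} {θ : ℕ → Val} {r : ℚ}

theorem mono {r' : ℚ} (h : RealCtx Γ θ r) (hle : r' ≤ r) : RealCtx Γ θ r' := by
  obtain ⟨s, u, hs, hu, hr⟩ := h
  exact ⟨s, u, hs, hu, hle.trans hr⟩

theorem emptyCtx_zero : RealCtx emptyCtx θ 0 := ⟨∅, 0, fun _ _ => rfl, by simp, by simp⟩

theorem le_zero_of_emptyCtx (h : RealCtx emptyCtx θ r) : r ≤ 0 := by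
  obtain ⟨s, u, -, hu, hr⟩ := h
  exact hr.trans (Finset.sum_nonpos fun y hy => (hu y hy).le_zero_of_nil)

theorem restrict (h : RealCtx Γ θ r) (hθ : ∀ y, (θ y).Closed) {t : Finset ℕ}
    (ht : ∀ y ∉ t, Γ y = []) :
    ∃ u : ℕ → ℚ, (∀ y ∈ t, RealI (Γ y) (θ y) (u y)) ∧ r ≤ ∑ y ∈ t, u y := by
  classical
  obtain ⟨s, u, hs, hu, hr⟩ := h
  refine ⟨fun y => if y ∈ s then u y else 0, fun y hy => ?_, hr.trans ?_⟩
  · dsimp only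
    split_ifs with hys
    · exact hu y hys
    · exact hs y hys ▸ RealI_nil.mpr ⟨hθ y, le_rfl⟩
  · rw [Finset.sum_ite, Finset.sum_const_zero, add_zero,
      ← Finset.sum_filter_add_sum_filter_not s (· ∈ t)]
    have : ∑ y ∈ s.filter (· ∉ t), u y ≤ 0 := Finset.sum_nonpos fun y hy => by
      obtain ⟨hys, hyt⟩ := Finset.mem_filter.mp hy
      exact (ht y hyt ▸ hu y hys).le_zero_of_nil
    have hst : t.filter (· ∈ s) = s.filter (· ∈ t) := by ext; simp [and_comm]
    rw [hst]
    linarith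

theorem realI_of_update {x : ℕ} {A : ITy} (h : RealCtx (Function.update emptyCtx x A) θ r)
    (hθ : ∀ y, (θ y).Closed) : RealI A (θ x) r := by
  obtain ⟨u, hu, hr⟩ := h.restrict hθ (t := {x}) fun y hy => by
    simp [Function.update_of_ne (Finset.notMem_singleton.mp hy), emptyCtx]
  simpa using (hu x (Finset.mem_singleton_self x)).mono (by simpa using hr)

theorem update (h : RealCtx Γ θ r) (hθ : ∀ y, (θ y).Closed) {x : ℕ} (hx : Γ x = [])
    {A : ITy} {W : Val} {u : ℚ} (hW : RealI A W u) :
    RealCtx (Function.update Γ x A) (Function.update θ x W) (r + u) := by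
  obtain ⟨s, -, hs, -, -⟩ := id h
  have hsx : ∀ y ∉ s.erase x, Γ y = [] := fun y hy => by
    by_cases hyx : y = x
    · exact hyx ▸ hx
    · exact hs y fun h => hy (Finset.mem_erase.mpr ⟨hyx, h⟩)
  obtain ⟨v, hv, hrv⟩ := h.restrict hθ hsx
  refine ⟨insert x (s.erase x), Function.update v x u, fun y hy => ?_, fun y hy => ?_, ?_⟩
  · obtain ⟨hyx, hy⟩ := not_or.mp (Finset.mem_insert.not.mp hy)
    rw [Function.update_of_ne hyx]
    exact hsx y hy
  · rcases Finset.mem_insert.mp hy with rfl | hy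
    · simpa using hW
    · have hyx := Finset.ne_of_mem_erase hy
      simpa [Function.update_of_ne hyx] using hv y hy
  · rw [Finset.sum_insert (Finset.notMem_erase x s), Function.update_self,
      Finset.sum_congr rfl fun y hy => Function.update_of_ne (Finset.ne_of_mem_erase hy) _ _]
    linarith

theorem of_ctxUnion (h : RealCtx (ctxUnion Γ Δ) θ r) :
    ∃ r₁ r₂, RealCtx Γ θ r₁ ∧ RealCtx Δ θ r₂ ∧ r ≤ r₁ + r₂ := by
  obtain ⟨s, u, hs, hu, hr⟩ := h
  have hsplit : ∀ y, ∃ u₁ u₂ : ℚ, y ∈ s →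
      RealI (Γ y) (θ y) u₁ ∧ RealI (Δ y) (θ y) u₂ ∧ u y ≤ u₁ + u₂ := fun y => by
    by_cases hy : y ∈ s
    · obtain ⟨u₁, u₂, h⟩ := RealI_append (hu y hy)
      exact ⟨u₁, u₂, fun _ => h⟩
    · exact ⟨0, 0, fun h => absurd h hy⟩
  choose u₁ u₂ hu₁₂ using hsplit
  refine ⟨_, _, ⟨s, u₁, fun y hy => (List.append_eq_nil_iff.mp (hs y hy)).1,
      fun y hy => (hu₁₂ y hy).1, le_rfl⟩,
    ⟨s, u₂, fun y hy => (List.append_eq_nil_iff.mp (hs y hy)).2,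
      fun y hy => (hu₁₂ y hy).2.1, le_rfl⟩, ?_⟩
  rw [← Finset.sum_add_distrib]
  exact hr.trans (Finset.sum_le_sum fun y hy => (hu₁₂ y hy).2.2)

theorem of_scaleL {q : ℚ} (h : RealCtx (fun y => scaleL q (Γ y)) θ r) :
    ∃ r', RealCtx Γ θ r' ∧ r ≤ q * r' := by
  obtain ⟨s, u, hs, hu, hr⟩ := h
  have hsplit : ∀ y, ∃ u' : ℚ, y ∈ s → RealI (Γ y) (θ y) u' ∧ u y ≤ q * u' := fun y => by
    by_cases hy : y ∈ s
    · obtain ⟨u', h⟩ := RealI_scaleL (hu y hy)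
      exact ⟨u', fun _ => h⟩
    · exact ⟨0, fun h => absurd h hy⟩
  choose u' hu' using hsplit
  refine ⟨_, ⟨s, u', fun y hy => List.map_eq_nil_iff.mp (hs y hy), fun y hy => (hu' y hy).1,
    le_rfl⟩, ?_⟩
  rw [Finset.mul_sum]
  exact hr.trans (Finset.sum_le_sum fun y hy => (hu' y hy).2)

theorem of_flatten {X : Type*} (q : X → ℚ) (G : X → Ctx) :
    ∀ (L : List X) {r : ℚ},
    RealCtx (fun y => (L.map fun k => scaleL (q k) (G k y)).flatten) θ r →
    ∃ L' : List (X × ℚ), L'.map Prod.fst = L ∧ (∀ p ∈ L', RealCtx (G p.1) θ p.2) ∧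
      r ≤ (L'.map fun p => q p.1 * p.2).sum
  | [], r, h => ⟨[], rfl, by simp, by simpa using le_zero_of_emptyCtx h⟩
  | k :: L, r, h => by
      obtain ⟨r₁, r₂, h₁, h₂, hr⟩ := of_ctxUnion (Γ := fun y => scaleL (q k) (G k y)) h
      obtain ⟨r₁', h₁', hr₁⟩ := of_scaleL h₁
      obtain ⟨L', rfl, hL', hr₂⟩ := of_flatten q G L h₂
      refine ⟨(k, r₁') :: L', rfl, ?_, ?_⟩
      · rintro p (_ | ⟨_, hp⟩)
        · exact h₁'
        · exact hL' p hp
      · simp only [List.map_cons, List.sum_cons]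
        linarith

end RealCtx

theorem closed_update {θ : ℕ → Val} (hθ : ∀ y, (θ y).Closed) {x : ℕ} {W : Val}
    (hW : W.Closed) :
    ∀ y, (Function.update θ x W y).Closed := fun y => by
  rcases eq_or_ne y x with rfl | hyx
  · simpa using hW
  · simpa [Function.update_of_ne hyx] using hθ y

def RealTy : Ty → Tm → ℚ → Prop
  | .arrow X, M, w => ∃ V, M = .val V ∧ RealV X V w
  | .inter A, M, w => ∃ V, M = .val V ∧ RealI A V w
  | .dist b, M, w => RealT b M w

@[simp] theorem realTy_arrow_val {X : ATy} {V : Val} {w : ℚ} :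
    RealTy (.arrow X) (.val V) w ↔ RealV X V w := by
  simp [RealTy]

@[simp] theorem realTy_inter_val {A : ITy} {V : Val} {w : ℚ} :
    RealTy (.inter A) (.val V) w ↔ RealI A V w := by
  simp [RealTy]

@[simp] theorem realTy_dist {b : DTy} {M : Tm} {w : ℚ} : RealTy (.dist b) M w ↔ RealT b M w :=
  Iff.rfl

/-- `Γ ⊨_w M : τ`. -/
def Valid (Γ : Ctx) (w : ℚ) (M : Tm) (τ : Ty) : Prop :=
  ∀ θ : ℕ → Val, (∀ y, (θ y).Closed) →
    ∀ r, RealCtx Γ θ r → RealTy τ (msubstT M θ) (w + r)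

theorem valid_var (x : ℕ) (A : ITy) :
    Valid (Function.update emptyCtx x A) 0 (.val (.var x)) (.inter A) := fun θ hθ r hr => by
  simpa [msubstT, msubstV] using hr.realI_of_update hθ

theorem valid_zero (M : Tm) : Valid emptyCtx 0 M (.dist []) := fun θ hθ r hr =>
  (RealT_nil (closed_msubstT fun z _ => hθ z)).mono (by linarith [hr.le_zero_of_emptyCtx])

theorem valid_lam {Γ : Ctx} {w : ℚ} {M : Tm} (x : ℕ) {b : DTy} (h : Valid Γ w M (.dist b)) :
    Valid (Function.update Γ x []) (w + 1) (.val (.lam x M)) (.arrow (.arr (Γ x) b)) := by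
  intro θ hθ r hr
  refine realTy_arrow_val.mpr
    (RealV_arr.mpr ⟨closed_msubstV fun z _ => hθ z, fun W u hW => ?_⟩)
  have hctx : RealCtx Γ (Function.update θ x W) (r + u) := by
    simpa using hr.update hθ (Function.update_self x [] Γ) hW
  have hM : RealT b (msubstT M (Function.update θ x W)) (w + (r + u)) :=
    h _ (closed_update hθ hW.closed) _ hctx
  rw [← substT_msubstT_update M θ x hW.closed fun z _ _ => .inr (hθ z)] at hM
  exact (RealT_app_lam hM).mono (by linarith)

theorem valid_app {Γ Δ : Ctx} {w v : ℚ} {V W : Val} {A : ITy} {b : DTy}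
    (hV : Valid Γ w (.val V) (.inter [(1, .arr A b)])) (hW : Valid Δ v (.val W) (.inter A)) :
    Valid (ctxUnion Γ Δ) (w + v) (.app V W) (.dist b) := by
  intro θ hθ r hr
  obtain ⟨r₁, r₂, hr₁, hr₂, hr⟩ := hr.of_ctxUnion
  have hV := (realTy_inter_val.mp (hV θ hθ r₁ hr₁)).realV_of_singleton
  have hW := realTy_inter_val.mp (hW θ hθ r₂ hr₂)
  exact ((RealV_arr.mp hV).2 _ _ hW).mono (by linarith)

theorem valid_choice {Γ Δ : Ctx} {w v : ℚ} {M N : Tm} {a b : DTy}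
    (hM : Valid Γ w M (.dist a)) (hN : Valid Δ v N (.dist b)) :
    Valid (ctxUnion (fun y => scaleL (1/2) (Γ y)) (fun y => scaleL (1/2) (Δ y)))
      (w / 2 + v / 2 + 1) (.choice M N) (.dist (scaleL (1/2) a ++ scaleL (1/2) b)) := by
  intro θ hθ r hr
  obtain ⟨r₁, r₂, hr₁, hr₂, hr⟩ := hr.of_ctxUnion
  obtain ⟨r₁, hr₁, hle₁⟩ := hr₁.of_scaleL
  obtain ⟨r₂, hr₂, hle₂⟩ := hr₂.of_scaleL
  exact (RealT_choice (hM θ hθ r₁ hr₁) (hN θ hθ r₂ hr₂)).mono (by linarith)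

theorem valid_tval {Γ : Ctx} {w : ℚ} {V : Val} {A : ITy} (h : Valid Γ w (.val V) (.inter A)) :
    Valid Γ w (.val V) (.dist [(1, A)]) := fun θ hθ r hr =>
  RealT_val (realTy_inter_val.mp (h θ hθ r hr))

theorem valid_bang {V : Val} (I : List (ℚ × Ctx × ℚ × ATy))
    (h : ∀ k ∈ I, Valid k.2.1 k.2.2.1 (.val V) (.arrow k.2.2.2)) :
    Valid (fun y => (I.map fun k => scaleL k.1 (k.2.1 y)).flatten)
      ((I.map fun k => k.1 * k.2.2.1).sum) (.val V) (.inter (I.map fun k => (k.1, k.2.2.2))) := by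
  intro θ hθ r hr
  obtain ⟨L, rfl, hL, hr⟩ := hr.of_flatten (fun k => k.1) (fun k => k.2.1) I
  refine realTy_inter_val.mpr ⟨closed_msubstV fun z _ => hθ z,
    L.map fun p => (p.1.1, p.1.2.2.2, p.1.2.2.1 + p.2), by simp [Function.comp_def], ?_, ?_⟩
  · simp only [List.mem_map]
    rintro _ ⟨p, hp, rfl⟩
    exact realTy_arrow_val.mp (h p.1 (List.mem_map_of_mem hp) θ hθ p.2 (hL p hp))
  · simp only [List.map_map, Function.comp_def, mul_add, List.sum_map_add]
    linarith

theorem valid_letin {Γ : Ctx} {v : ℚ} (x : ℕ) {N M : Tm}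
    (K : List (ℚ × ITy × Ctx × ℚ × DTy))
    (hK : ∀ k ∈ K, k.2.2.1 x = [])
    (hM : ∀ k ∈ K, Valid (Function.update k.2.2.1 x k.2.1) k.2.2.2.1 M (.dist k.2.2.2.2))
    (hN : Valid Γ v N (.dist (K.map fun k => (k.1, k.2.1)))) :
    Valid (ctxUnion Γ (fun y => (K.map fun k => scaleL k.1 (k.2.2.1 y)).flatten))
      ((K.map fun k => k.1 * k.2.2.2.1).sum + v + 1) (.letin x N M)
      (.dist (K.map fun k => scaleL k.1 k.2.2.2.2).flatten) := by
  intro θ hθ r hr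
  obtain ⟨rN, rK, hrN, hrK, hr⟩ := hr.of_ctxUnion
  obtain ⟨L, rfl, hL, hrK⟩ := hrK.of_flatten (fun k => k.1) (fun k => k.2.2.1) K
  have hlet := RealT_letin (x := x)
    (J := L.map fun p => (p.1.1, p.1.2.1, p.1.2.2.2.1 + p.2, p.1.2.2.2.2))
    (fvT_msubstT_update_subset (M := M) hθ)
    (by simpa [Function.comp_def] using hN θ hθ rN hrN) ?_
  · simp only [List.map_map, Function.comp_def, mul_add, List.sum_map_add, realTy_dist] at hlet ⊢
    exact hlet.mono (by linarith)
  · simp only [List.mem_map]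
    rintro _ ⟨p, hp, rfl⟩ W u hW
    have hctx := (hL p hp).update hθ (hK _ (List.mem_map_of_mem hp)) hW
    have := hM p.1 (List.mem_map_of_mem hp) _ (closed_update hθ hW.closed) _ hctx
    rw [← substT_msubstT_update M θ x hW.closed fun z _ _ => .inr (hθ z)] at this
    exact this.mono (by linarith)

theorem Deriv.valid {Γ : Ctx} {w : ℚ} {M : Tm} {τ : Ty} (d : Deriv Γ w M τ) :
    Valid Γ w M τ := by
  induction d with
  | var x A => exact valid_var x A
  | zero M => exact valid_zero M
  | lam x b _ ih => exact valid_lam x ih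
  | app _ _ ih₁ ih₂ => exact valid_app ih₁ ih₂
  | choice _ _ ih₁ ih₂ => exact valid_choice ih₁ ih₂
  | letin x K hK _ _ ihM ihN => exact valid_letin x K hK (List.forall_mem_iff_get.mpr ihM) ihN
  | tval _ ih => exact valid_tval ih
  | bang I _ _ ih => exact valid_bang I (List.forall_mem_iff_get.mpr ih)

theorem Valid.realT_of_closed {w : ℚ} {M : Tm} {b : DTy} (h : Valid emptyCtx w M (.dist b))
    (hM : M.Closed) : RealT b M w := by
  have hθ : ∀ _ : ℕ, (Val.lam 0 (.val (.var 0))).Closed := fun _ => by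
    simp [Val.Closed, fvV, fvT]
  simpa [msubstT_of_closed hM] using h _ hθ 0 RealCtx.emptyCtx_zero

theorem ofReal_etime_le_ETime (k : ℕ) (M : Tm) :
    ENNReal.ofReal (etime k M : ℝ) ≤ ETime M := by
  have hterm : ∀ j, 0 ≤ (1 : ℝ) - (evalP j M : ℝ) := fun j => by
    exact_mod_cast sub_nonneg.mpr (evalP_le_one j M)
  rw [etime, Rat.cast_sum, ENNReal.ofReal_sum_of_nonneg fun j _ => by exact_mod_cast hterm j]
  push_cast
  exact ENNReal.sum_le_tsum _

/-- **Finitary Soundness of Null Typing**: if `⊢_w M : 𝟘` is derivable for a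
closed term `M`, then `w ≤ etime_k(M)` for some `k`; in particular
`w ≤ ETime(M)`. -/
theorem finitary_soundness_null {M : Tm} (hM : M.Closed) {w : ℚ}
    (h : Nonempty (Deriv emptyCtx w M (.dist []))) :
    (∃ k : ℕ, w ≤ etime k M) ∧ ENNReal.ofReal ((w : ℚ) : ℝ) ≤ ETime M := by
  obtain ⟨d⟩ := h
  obtain ⟨k, hk⟩ := (d.valid.realT_of_closed hM).exists_le_etime
  exact ⟨⟨k, hk⟩,
    (ENNReal.ofReal_le_ofReal (by exact_mod_cast hk)).trans (ofReal_etime_le_ETime k M)⟩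

end CbV
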